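/- The function g: [0,π] → R defined by g(φ) = (2φ - sin(2φ))/(2φ²) for φ > 0 and g(0) = 0 attains its maximum at φ = π/2 with g(π/2) = 2/π; it is strictly increasing on [0, π/2] with range [0, 2/π], and strictly decreasing on [π/2, π] with range [1/π, 2/π]. -/

import Mathlib

/-!
Away from `0`, `g'(φ) = 2 cos φ (sin φ - φ cos φ) / φ³`, and `φ cos φ < sin φ` on `(0, π)`
(trivially where `cos φ ≤ 0`, and from `φ < tan φ` elsewhere), so `g'` has the sign of
`cos φ`. At `0`, the bound `x - x³/6 < sin x` gives `0 ≤ g(φ) ≤ 2φ/3`, hence continuity from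
the right. The ranges then follow from the intermediate value theorem and `g(0) = 0`,
`g(π/2) = 2/π`, `g(π) = 1/π`.
-/

open scoped Real

noncomputable section

/-- The function `g(φ) = (2φ - sin 2φ)/(2φ²)`, `g(0) = 0`, parametrizing the vertical
profile of the unit Carnot–Carathéodory ball of the Heisenberg group. -/
def gProf (φ : ℝ) : ℝ := if φ = 0 then 0 else (2 * φ - Real.sin (2 * φ)) / (2 * φ ^ 2)

open Real Set Filter Topology

lemma gProf_of_ne_zero {φ : ℝ} (h : φ ≠ 0) :
    gProf φ = (2 * φ - sin (2 * φ)) / (2 * φ ^ 2) := if_neg h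

lemma gProf_zero : gProf 0 = 0 := if_pos rfl

lemma gProf_pi_div_two : gProf (π / 2) = 2 / π := by
  rw [gProf_of_ne_zero (by positivity), mul_div_cancel₀ π two_ne_zero, sin_pi]
  field_simp
  ring

lemma gProf_pi : gProf π = 1 / π := by
  rw [gProf_of_ne_zero pi_ne_zero, sin_two_pi]
  field_simp
  ring

lemma Real.mul_cos_lt_sin {x : ℝ} (h0 : 0 < x) (hπ : x < π) : x * cos x < sin x := by
  rcases le_or_gt (cos x) 0 with hc | hc
  · nlinarith [sin_pos_of_pos_of_lt_pi h0 hπ]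
  · have hx : x < π / 2 := by
      by_contra! hle
      exact hc.not_ge (cos_nonpos_of_pi_div_two_le_of_le hle (by linarith))
    have h := lt_tan h0 hx
    rwa [tan_eq_sin_div_cos, lt_div_iff₀ hc] at h

lemma hasDerivAt_gProf {φ : ℝ} (h : φ ≠ 0) :
    HasDerivAt gProf (2 * cos φ * (sin φ - φ * cos φ) / φ ^ 3) φ := by
  have hlin : HasDerivAt (fun x : ℝ => 2 * x) 2 φ := by
    simpa using (hasDerivAt_id φ).const_mul 2
  have hnum : HasDerivAt (fun x : ℝ => 2 * x - sin (2 * x)) (2 - cos (2 * φ) * 2) φ :=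
    hlin.sub ((hasDerivAt_sin (2 * φ)).comp φ hlin)
  have hden : HasDerivAt (fun x : ℝ => 2 * x ^ 2) (2 * (2 * φ)) φ := by
    simpa using (hasDerivAt_pow 2 φ).const_mul 2
  have hquot := hnum.div hden (by positivity)
  have heq : gProf =ᶠ[𝓝 φ] fun x => (2 * x - sin (2 * x)) / (2 * x ^ 2) := by
    filter_upwards [eventually_ne_nhds h] with x hx
    exact gProf_of_ne_zero hx
  refine (hquot.congr_of_eventuallyEq heq).congr_deriv ?_
  rw [sin_two_mul, cos_two_mul]
  field_simp
  ring

lemma gProf_nonneg {φ : ℝ} (h : 0 ≤ φ) : 0 ≤ gProf φ := by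
  rcases h.eq_or_lt with rfl | hpos
  · exact gProf_zero.ge
  rw [gProf_of_ne_zero hpos.ne']
  have := sin_lt (by positivity : 0 < 2 * φ)
  exact div_nonneg (by linarith) (by positivity)

lemma gProf_le {φ : ℝ} (h : 0 ≤ φ) : gProf φ ≤ 2 * φ / 3 := by
  rcases h.eq_or_lt with rfl | hpos
  · simp [gProf_zero]
  rw [gProf_of_ne_zero hpos.ne', div_le_iff₀ (by positivity)]
  nlinarith [sin_gt_sub_cube (by positivity : 0 < 2 * φ)]

lemma continuousOn_gProf : ContinuousOn gProf (Ici 0) := by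
  intro φ hφ
  rcases eq_or_ne φ 0 with rfl | hne
  · have hcont : Continuous fun x : ℝ => 2 * x / 3 := by fun_prop
    have hlin : Tendsto (fun x : ℝ => 2 * x / 3) (𝓝[Ici 0] 0) (𝓝 0) :=
      tendsto_nhdsWithin_of_tendsto_nhds (by simpa using hcont.tendsto 0)
    rw [ContinuousWithinAt, gProf_zero]
    exact tendsto_of_tendsto_of_tendsto_of_le_of_le' tendsto_const_nhds hlin
      (eventually_nhdsWithin_of_forall fun _ => gProf_nonneg)
      (eventually_nhdsWithin_of_forall fun _ => gProf_le)
  · exact (hasDerivAt_gProf hne).continuousAt.continuousWithinAt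

lemma strictMonoOn_gProf : StrictMonoOn gProf (Icc 0 (π / 2)) := by
  refine strictMonoOn_of_hasDerivWithinAt_pos (convex_Icc _ _)
    (continuousOn_gProf.mono Icc_subset_Ici_self)
    (fun x hx => (hasDerivAt_gProf (ne_of_gt ?_)).hasDerivWithinAt) (fun x hx => ?_) <;>
    rw [interior_Icc] at hx
  · exact hx.1
  obtain ⟨hx0, hx⟩ := hx
  have hc : 0 < cos x := cos_pos_of_mem_Ioo ⟨by linarith, hx⟩
  have hs := mul_cos_lt_sin hx0 (by linarith)
  exact div_pos (mul_pos (mul_pos two_pos hc) (sub_pos.2 hs)) (pow_pos hx0 3)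

lemma strictAntiOn_gProf : StrictAntiOn gProf (Icc (π / 2) π) := by
  have h0 : (0 : ℝ) < π / 2 := by positivity
  refine strictAntiOn_of_hasDerivWithinAt_neg (convex_Icc _ _)
    (continuousOn_gProf.mono fun x hx => h0.le.trans hx.1)
    (fun x hx => (hasDerivAt_gProf (ne_of_gt ?_)).hasDerivWithinAt) (fun x hx => ?_) <;>
    rw [interior_Icc] at hx
  · exact h0.trans hx.1
  obtain ⟨hx1, hx⟩ := hx
  have hc : cos x < 0 := cos_neg_of_pi_div_two_lt_of_lt hx1 (by linarith)
  have hs := mul_cos_lt_sin (h0.trans hx1) hx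
  exact div_neg_of_neg_of_pos (mul_neg_of_neg_of_pos (mul_neg_of_pos_of_neg two_pos hc)
    (sub_pos.2 hs)) (pow_pos (h0.trans hx1) 3)

lemma isMaxOn_Icc_of_monotoneOn_of_antitoneOn {α β : Type*} [LinearOrder α] [Preorder β]
    {f : α → β} {a b c : α} (hab : a ≤ b) (hbc : b ≤ c) (hmono : MonotoneOn f (Icc a b))
    (hanti : AntitoneOn f (Icc b c)) : IsMaxOn f (Icc a c) b := by
  intro x hx
  rcases le_total x b with hxb | hbx
  · exact hmono ⟨hx.1, hxb⟩ (right_mem_Icc.2 hab) hxb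
  · exact hanti (left_mem_Icc.2 hbc) ⟨hbx, hx.2⟩ hbx

/-- `g` attains its maximum on `[0,π]` at `π/2` with value `2/π`; it is strictly
increasing on `[0,π/2]` with range `[0,2/π]` and strictly decreasing on `[π/2,π]` with
range `[1/π,2/π]`. -/
theorem stmt4 :
    gProf (π / 2) = 2 / π ∧
    IsMaxOn gProf (Set.Icc 0 π) (π / 2) ∧
    StrictMonoOn gProf (Set.Icc 0 (π / 2)) ∧
    gProf '' Set.Icc 0 (π / 2) = Set.Icc 0 (2 / π) ∧
    StrictAntiOn gProf (Set.Icc (π / 2) π) ∧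
    gProf '' Set.Icc (π / 2) π = Set.Icc (1 / π) (2 / π) := by
  have h0 : (0 : ℝ) ≤ π / 2 := by positivity
  have hπ : π / 2 ≤ π := by linarith [pi_pos]
  refine ⟨gProf_pi_div_two, isMaxOn_Icc_of_monotoneOn_of_antitoneOn h0 hπ
    strictMonoOn_gProf.monotoneOn strictAntiOn_gProf.antitoneOn, strictMonoOn_gProf, ?_,
    strictAntiOn_gProf, ?_⟩
  · rw [(continuousOn_gProf.mono Icc_subset_Ici_self).image_Icc_of_monotoneOn h0
      strictMonoOn_gProf.monotoneOn, gProf_zero, gProf_pi_div_two]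
  · rw [(continuousOn_gProf.mono fun x hx => h0.trans hx.1).image_Icc_of_antitoneOn hπ
      strictAntiOn_gProf.antitoneOn, gProf_pi, gProf_pi_div_two]
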